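/- In the extended MDP of a finite low-rank MDP of dimension d, for every η > 0, every h ∈ [H], every x ∈ X_h, and every ℓ ∈ {h, …, H}, it holds that max_{π∈Π̄_{ℓ−1,η}} d̄^π(x) = max_{π∈Π̄_{ℓ,η}} d̄^π(x). Consequently, for every x ∈ X_h, max_{π∈Π̄_{h−1,η}} d̄^π(x) = max_{π∈Π̄_η} d̄^π(x): truncation at layers h and later does not change the maximal occupancy of any layer-h state. -/

import Mathlib

open scoped BigOperators RealInnerProductSpace

universe u v

variable {X : ℕ → Type u} {A : Type v} [∀ k, Fintype (X k)] [Fintype A] [DecidableEq A]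

noncomputable def occ (ρ : X 0 → ℝ) (T : ∀ k, X k → A → X (k + 1) → ℝ)
    (π : ∀ k, X k → A → ℝ) : ∀ k, X k → ℝ
  | 0, x => ρ x
  | k + 1, x' => ∑ x : X k, ∑ a : A, occ ρ T π k x * π k x a * T k x a x'

def IsPolicy (π : ∀ k, X k → A → ℝ) : Prop :=
  ∀ (k : ℕ) (x : X k), (∀ a, 0 ≤ π k x a) ∧ (∑ a : A, π k x a = 1)

def IsInit (ρ : X 0 → ℝ) : Prop :=
  (∀ x, 0 ≤ ρ x) ∧ (∑ x : X 0, ρ x = 1)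

/-- Transition kernel of the extended MDP `M̄`: states `X k ⊕ Unit` (with `Sum.inr ()` the
terminal state `t_{k+1}`), actions `A ⊕ Unit` (with `Sum.inr ()` the terminal action `𝔞`).
The terminal action from any state, and any action from a terminal state, lead
deterministically to the next terminal state; all other transitions are as in `T`. -/
noncomputable def Tb (T : ∀ k, X k → A → X (k + 1) → ℝ) :
    ∀ k, (X k ⊕ Unit) → (A ⊕ Unit) → (X (k + 1) ⊕ Unit) → ℝ
  | k, Sum.inl x, Sum.inl a, Sum.inl x' => T k x a x'
  | _, Sum.inl _, Sum.inl _, Sum.inr _ => 0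
  | _, Sum.inl _, Sum.inr _, Sum.inl _ => 0
  | _, Sum.inl _, Sum.inr _, Sum.inr _ => 1
  | _, Sum.inr _, _, Sum.inl _ => 0
  | _, Sum.inr _, _, Sum.inr _ => 1

/-- Initial distribution of the extended MDP (terminal states have zero mass). -/
def ρb (ρ : X 0 → ℝ) : (X 0 ⊕ Unit) → ℝ := Sum.elim ρ fun _ => 0

/-- A Markov policy of the extended MDP; by convention it takes the terminal action at
terminal states. -/
def IsExtPolicy (π : ∀ k, (X k ⊕ Unit) → (A ⊕ Unit) → ℝ) : Prop :=
  (∀ (k : ℕ) (x : X k ⊕ Unit), (∀ a, 0 ≤ π k x a) ∧ (∑ a, π k x a = 1)) ∧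
  (∀ k : ℕ, π k (Sum.inr ()) (Sum.inr ()) = 1)

/-- Occupancy measure `d̄^π` in the extended MDP. -/
noncomputable def occb (ρ : X 0 → ℝ) (T : ∀ k, X k → A → X (k + 1) → ℝ)
    (π : ∀ k, (X k ⊕ Unit) → (A ⊕ Unit) → ℝ) (k : ℕ) (x : X k ⊕ Unit) : ℝ :=
  occ (X := fun k => X k ⊕ Unit) (A := A ⊕ Unit) (ρb ρ) (Tb T) π k x

/-- Extended feature map `μ̄` in `ℝ^{d+1}`: `μ̄(x) = (μ(x), 0)` for original states and
`μ̄(t) = e_{d+1}` for terminal states. -/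
noncomputable def muExt (d : ℕ) (μ : ∀ k, X k → EuclideanSpace ℝ (Fin d)) (k : ℕ) :
    (X k ⊕ Unit) → EuclideanSpace ℝ (Fin (d + 1))
  | Sum.inl x => WithLp.toLp 2 (fun i => if hi : (i : ℕ) < d then μ k x ⟨i, hi⟩ else 0)
  | Sum.inr _ => WithLp.toLp 2 (fun i => if (i : ℕ) = d then 1 else 0)

/-- The `η`-reachable states at (0-indexed) layer `k` relative to a set `P` of extended
policies; by convention every state of layer `0` is reachable. -/
noncomputable def reachSet (d : ℕ) (ρ : X 0 → ℝ) (T : ∀ k, X k → A → X (k + 1) → ℝ)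
    (μ : ∀ k, X k → EuclideanSpace ℝ (Fin d)) (η : ℝ)
    (P : Set (∀ k, (X k ⊕ Unit) → (A ⊕ Unit) → ℝ)) : ∀ k : ℕ, Set (X k)
  | 0 => Set.univ
  | k + 1 => {x | η * ‖muExt d μ (k + 1) (Sum.inl x)‖ ≤
      ⨆ π : P, occb ρ T π.1 (k + 1) (Sum.inl x)}

/-- The truncated policy classes `Π̄_{n,η}`: `trunc … n` is the paper's `Π̄_{n,η}`, where the
truncation at stage `n + 1` replaces the action by the terminal action at every
(0-indexed) layer-`n` state that is not `η`-reachable relative to `Π̄_{n,η}`, leaving the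
policy unchanged everywhere else.  `Π̄_η = trunc … H`. -/
noncomputable def trunc (d : ℕ) (ρ : X 0 → ℝ) (T : ∀ k, X k → A → X (k + 1) → ℝ)
    (μ : ∀ k, X k → EuclideanSpace ℝ (Fin d)) (η : ℝ) :
    ℕ → Set (∀ k, (X k ⊕ Unit) → (A ⊕ Unit) → ℝ)
  | 0 => {π | IsExtPolicy π}
  | n + 1 => {π | ∃ π' ∈ trunc d ρ T μ η n,
      (∀ m, m ≠ n → π m = π' m) ∧
      (∀ x : X n, x ∈ reachSet d ρ T μ η (trunc d ρ T μ η n) n →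
        π n (Sum.inl x) = π' n (Sum.inl x)) ∧
      (∀ x : X n, x ∉ reachSet d ρ T μ η (trunc d ρ T μ η n) n →
        ∀ a, π n (Sum.inl x) a = if a = Sum.inr () then 1 else 0) ∧
      π n (Sum.inr ()) = π' n (Sum.inr ())}

/-- A policy of the original MDP viewed as a policy of the extended MDP (it never takes
the terminal action at original states). -/
def embed (π : ∀ k, X k → A → ℝ) : ∀ k, (X k ⊕ Unit) → (A ⊕ Unit) → ℝ
  | k, Sum.inl x, Sum.inl a => π k x a
  | _, Sum.inl _, Sum.inr _ => 0
  | _, Sum.inr _, Sum.inl _ => 0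
  | _, Sum.inr _, Sum.inr _ => 1

/-! The occupancy of a layer-`h` state only depends on the policy at layers `< h`, while the
passage from `Π̄_{m,η}` to `Π̄_{m+1,η}` only changes policies at layer `m`. Hence for `m ≥ h`
both classes produce the same set of occupancies of a layer-`h` state, and so the same
maximum. -/

theorem occ_congr_of_eq_below {X : ℕ → Type*} {A : Type*} [∀ k, Fintype (X k)] [Fintype A]
    (ρ : X 0 → ℝ) (T : ∀ k, X k → A → X (k + 1) → ℝ) {π π' : ∀ k, X k → A → ℝ} :
    ∀ {h : ℕ}, (∀ k < h, π k = π' k) → occ ρ T π h = occ ρ T π' h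
  | 0, _ => rfl
  | h + 1, heq => by
    funext x'
    simp only [occ, occ_congr_of_eq_below ρ T fun k hk => heq k (Nat.lt_succ_of_lt hk),
      heq h (Nat.lt_succ_self h)]

open Classical in
noncomputable def truncateAt {X : ℕ → Type*} {A : Type*} (R : ∀ k, Set (X k)) (m : ℕ)
    (π : ∀ k, (X k ⊕ Unit) → (A ⊕ Unit) → ℝ) : ∀ k, (X k ⊕ Unit) → (A ⊕ Unit) → ℝ :=
  fun k s a => match s with
    | Sum.inl x => if k = m ∧ x ∉ R k then (if a = Sum.inr () then 1 else 0)
        else π k (Sum.inl x) a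
    | Sum.inr u => π k (Sum.inr u) a

theorem truncateAt_of_ne {X : ℕ → Type*} {A : Type*} (R : ∀ k, Set (X k)) {m k : ℕ}
    (π : ∀ k, (X k ⊕ Unit) → (A ⊕ Unit) → ℝ) (hk : k ≠ m) :
    truncateAt R m π k = π k := by
  funext s a
  cases s <;> simp [truncateAt, hk]

section Truncation

variable (d : ℕ) (ρ : X 0 → ℝ) (T : ∀ k, X k → A → X (k + 1) → ℝ)
  (μ : ∀ k, X k → EuclideanSpace ℝ (Fin d)) (η : ℝ)

theorem truncateAt_mem_trunc_succ {m : ℕ} {π : ∀ k, (X k ⊕ Unit) → (A ⊕ Unit) → ℝ}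
    (hπ : π ∈ trunc d ρ T μ η m) :
    truncateAt (reachSet d ρ T μ η (trunc d ρ T μ η m)) m π ∈ trunc d ρ T μ η (m + 1) := by
  refine ⟨π, hπ, fun k hk => truncateAt_of_ne _ _ hk, fun x hx => ?_, fun x hx a => ?_, rfl⟩
  · funext a
    simp [truncateAt, hx]
  · simp [truncateAt, hx]

theorem occb_image_trunc_succ {h m : ℕ} (hm : h ≤ m) (x : X h ⊕ Unit) :
    (fun π => occb ρ T π h x) '' trunc d ρ T μ η (m + 1) =
      (fun π => occb ρ T π h x) '' trunc d ρ T μ η m := by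
  have occb_eq {π π' : ∀ k, (X k ⊕ Unit) → (A ⊕ Unit) → ℝ} (heq : ∀ k ≠ m, π k = π' k) :
      occb ρ T π h x = occb ρ T π' h x :=
    congrFun (occ_congr_of_eq_below _ _ fun k hk => heq k (by omega)) x
  ext v
  constructor
  · rintro ⟨π, ⟨π', hπ', heq, -⟩, rfl⟩
    exact ⟨π', hπ', (occb_eq heq).symm⟩
  · rintro ⟨π, hπ, rfl⟩
    exact ⟨_, truncateAt_mem_trunc_succ d ρ T μ η hπ,
      occb_eq fun k hk => truncateAt_of_ne _ _ hk⟩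

theorem iSup_occb_trunc_succ {h m : ℕ} (hm : h ≤ m) (x : X h ⊕ Unit) :
    (⨆ π : trunc d ρ T μ η m, occb ρ T π.1 h x) =
      ⨆ π : trunc d ρ T μ η (m + 1), occb ρ T π.1 h x := by
  have hsup := congrArg sSup (occb_image_trunc_succ d ρ T μ η hm x)
  rw [Set.image_eq_range, Set.image_eq_range] at hsup
  exact hsup.symm

theorem iSup_occb_trunc_of_le {h n : ℕ} (hn : h ≤ n) (x : X h ⊕ Unit) :
    (⨆ π : trunc d ρ T μ η h, occb ρ T π.1 h x) =
      ⨆ π : trunc d ρ T μ η n, occb ρ T π.1 h x := by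
  induction n, hn using Nat.le_induction with
  | base => rfl
  | succ n hn ih => rw [ih, iSup_occb_trunc_succ d ρ T μ η hn]

end Truncation

theorem stmt_15_general (H d : ℕ)
    (ρ : X 0 → ℝ)
    (T : ∀ k, X k → A → X (k + 1) → ℝ)
    (μ : ∀ k, X k → EuclideanSpace ℝ (Fin d))
    (η : ℝ)
    (h : ℕ) (hh : h + 1 ≤ H) (x : X h) :
    (∀ m, h ≤ m → m < H →
      (⨆ π : trunc d ρ T μ η m, occb ρ T π.1 h (Sum.inl x)) =
        ⨆ π : trunc d ρ T μ η (m + 1), occb ρ T π.1 h (Sum.inl x)) ∧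
    (⨆ π : trunc d ρ T μ η h, occb ρ T π.1 h (Sum.inl x)) =
      ⨆ π : trunc d ρ T μ η H, occb ρ T π.1 h (Sum.inl x) :=
  ⟨fun _ hm _ => iSup_occb_trunc_succ d ρ T μ η hm _,
    iSup_occb_trunc_of_le d ρ T μ η (by omega) _⟩

/-- (Truncation at later layers does not change maximal occupancies; the
paper's Lemma B.3.)  In the extended MDP of a finite low-rank MDP of dimension `d`, for
every `η > 0`, every layer `h` (paper layer `h+1 ∈ [H]`) and every `x ∈ X h`: for each
`m ∈ {h, …, H-1}` the maximal occupancy of `x` over `Π̄_{m,η}` equals that over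
`Π̄_{m+1,η}` (these are the paper's pairs `(Π̄_{ℓ-1,η}, Π̄_{ℓ,η})` for `ℓ ∈ {h+1, …, H}`);
consequently the maximal occupancy over `Π̄_{h,η}` (the paper's `Π̄_{(h+1)-1,η}`) equals
that over `Π̄_η = Π̄_{H,η}`. -/
theorem stmt_15 (H d : ℕ) (hd : 1 ≤ d) (hH : 2 ≤ H)
    (ρ : X 0 → ℝ) (hρ : IsInit ρ)
    (T : ∀ k, X k → A → X (k + 1) → ℝ)
    (hT : ∀ k, k + 2 ≤ H → ∀ (x : X k) (a : A),
      (∀ x', 0 ≤ T k x a x') ∧ (∑ x', T k x a x' = 1))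
    (φ : ∀ k, X k → A → EuclideanSpace ℝ (Fin d))
    (μ : ∀ k, X k → EuclideanSpace ℝ (Fin d))
    (hlow : ∀ k, k + 2 ≤ H → ∀ (x : X k) (a : A) (x' : X (k + 1)),
      T k x a x' = ⟪μ (k + 1) x', φ k x a⟫)
    (η : ℝ) (hη : 0 < η)
    (h : ℕ) (hh : h + 1 ≤ H) (x : X h) :
    (∀ m, h ≤ m → m < H →
      (⨆ π : trunc d ρ T μ η m, occb ρ T π.1 h (Sum.inl x)) =
        ⨆ π : trunc d ρ T μ η (m + 1), occb ρ T π.1 h (Sum.inl x)) ∧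
    (⨆ π : trunc d ρ T μ η h, occb ρ T π.1 h (Sum.inl x)) =
      ⨆ π : trunc d ρ T μ η H, occb ρ T π.1 h (Sum.inl x) :=
  stmt_15_general H d ρ T μ η h hh x
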